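/- Let X and Y be topological spaces with Y compact and let f : Closed(X) → Closed(Y) be an admissible map. Then the Artin–Wraith glueing X +_f Y is compact if and only if f(A) ≠ ∅ for every closed non-compact subset A of X. -/
import Mathlib


namespace Paper

open Set Topology

/-! ### Coarse structures -/

/-- The inverse of a relation `e ⊆ X × X`. -/
def invRel {X : Type*} (e : Set (X × X)) : Set (X × X) := {p | (p.2, p.1) ∈ e}

/-- The composition of relations: `compRel e e' = {(a,b) | ∃ c, (a,c) ∈ e ∧ (c,b) ∈ e'}`.
This is `e' ∘ e` in the paper's notation. -/
def compRel {X : Type*} (e e' : Set (X × X)) : Set (X × X) :=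
  {p | ∃ c, (p.1, c) ∈ e ∧ (c, p.2) ∈ e'}

/-- A coarse structure on a set `X`. -/
def IsCoarseStructure {X : Type*} (ε : Set (Set (X × X))) : Prop :=
  Set.diagonal X ∈ ε ∧
  (∀ e ∈ ε, ∀ e' : Set (X × X), e' ⊆ e → e' ∈ ε) ∧
  (∀ e ∈ ε, ∀ e' ∈ ε, e ∪ e' ∈ ε) ∧
  (∀ e ∈ ε, invRel e ∈ ε) ∧
  (∀ e ∈ ε, ∀ e' ∈ ε, compRel e e' ∈ ε)

/-- The coarse structure generated by a family `A` of subsets of `X × X`: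
the intersection of all coarse structures containing `A`. -/
def genCoarse {X : Type*} (A : Set (Set (X × X))) : Set (Set (X × X)) :=
  ⋂₀ {ε | IsCoarseStructure ε ∧ A ⊆ ε}

/-- The `u`-neighbourhood `𝔅(B, u)` of a subset `B`. -/
def Bnh {X : Type*} (B : Set X) (u : Set (X × X)) : Set X := {x | ∃ y ∈ B, (x, y) ∈ u}

/-- A subset `B` is bounded for the coarse structure `ε` if `B × B ∈ ε`. -/
def CBounded {X : Type*} (ε : Set (Set (X × X))) (B : Set X) : Prop := B ×ˢ B ∈ ε

/-- A map is bornologous if it sends entourages to entourages. -/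
def Bornologous {X Y : Type*} (ε : Set (Set (X × X))) (ζ : Set (Set (Y × Y)))
    (f : X → Y) : Prop :=
  ∀ e ∈ ε, Prod.map f f '' e ∈ ζ

/-- A map is (coarsely) proper if preimages of bounded sets are bounded. -/
def CProper {X Y : Type*} (ε : Set (Set (X × X))) (ζ : Set (Set (Y × Y)))
    (f : X → Y) : Prop :=
  ∀ B : Set Y, CBounded ζ B → CBounded ε (f ⁻¹' B)

/-- A coarse map is a proper bornologous map. -/
def CoarseMap {X Y : Type*} (ε : Set (Set (X × X))) (ζ : Set (Set (Y × Y)))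
    (f : X → Y) : Prop :=
  Bornologous ε ζ f ∧ CProper ε ζ f

/-- Two maps `f g : S → X` are close if `{(f s, g s) | s ∈ S}` is an entourage. -/
def Close {S X : Type*} (ε : Set (Set (X × X))) (f g : S → X) : Prop :=
  Set.range (fun s => (f s, g s)) ∈ ε

/-- A coarse equivalence: a coarse map with a coarse quasi-inverse. -/
def CoarseEquiv {X Y : Type*} (ε : Set (Set (X × X))) (ζ : Set (Set (Y × Y)))
    (f : X → Y) : Prop :=
  CoarseMap ε ζ f ∧
    ∃ g : Y → X, CoarseMap ζ ε g ∧ Close ζ (f ∘ g) id ∧ Close ε (g ∘ f) id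

/-- The subspace coarse structure on `A ⊆ Y`. -/
def SubCoarse {Y : Type*} (ζ : Set (Set (Y × Y))) (A : Set Y) : Set (Set (↥A × ↥A)) :=
  {e | Prod.map (Subtype.val : A → Y) (Subtype.val : A → Y) '' e ∈ ζ}

/-- A coarse embedding: a coarse map which is a coarse equivalence onto its image with
the subspace coarse structure. -/
def CoarseEmbedding {X Y : Type*} (ε : Set (Set (X × X))) (ζ : Set (Set (Y × Y)))
    (f : X → Y) : Prop :=
  CoarseMap ε ζ f ∧ CoarseEquiv ε (SubCoarse ζ (Set.range f)) (Set.rangeFactorization f)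

/-- A coarse space is coarsely connected if every pair lies in some entourage. -/
def CoarselyConnected {X : Type*} (ε : Set (Set (X × X))) : Prop :=
  ∀ x y : X, ∃ e ∈ ε, (x, y) ∈ e

/-- `A` is quasi-dense if `𝔅(A, e) = X` for some entourage `e`. -/
def QuasiDense {X : Type*} (ε : Set (Set (X × X))) (A : Set X) : Prop :=
  ∃ e ∈ ε, Bnh A e = Set.univ

/-- A subset of a topological space is topologically bounded if its closure is compact. -/
def TopBounded {X : Type*} [TopologicalSpace X] (B : Set X) : Prop := IsCompact (closure B)

/-- A coarse structure on a topological space is proper if it contains a neighbourhood of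
the diagonal and every bounded set is topologically bounded. -/
def ProperCoarse {X : Type*} [TopologicalSpace X] (ε : Set (Set (X × X))) : Prop :=
  (∃ e ∈ ε, e ∈ nhdsSet (Set.diagonal X)) ∧ ∀ B : Set X, CBounded ε B → TopBounded B

/-! ### Artin–Wraith glueings -/

/-- An admissible map `f : Closed(X) → Closed(Y)`. -/
def Admissible {X Y : Type*} [TopologicalSpace X] [TopologicalSpace Y]
    (f : Set X → Set Y) : Prop :=
  (∀ A : Set X, IsClosed A → IsClosed (f A)) ∧
  (∀ A B : Set X, IsClosed A → IsClosed B → f (A ∪ B) = f A ∪ f B) ∧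
  f ∅ = ∅

/-- The closed sets of the Artin–Wraith glueing `X +_f Y`. -/
def AWClosed {X Y : Type*} [TopologicalSpace X] [TopologicalSpace Y]
    (f : Set X → Set Y) : Set (Set (X ⊕ Y)) :=
  {A | IsClosed (Sum.inl ⁻¹' A) ∧ IsClosed (Sum.inr ⁻¹' A) ∧
    Sum.inr '' f (Sum.inl ⁻¹' A) ⊆ A}

/-- The topology of the Artin–Wraith glueing `X +_f Y` on `X ⊕ Y`. (For admissible `f`,
the closed sets of this topology are exactly the members of `AWClosed f`.) -/
def AWTop {X Y : Type*} [TopologicalSpace X] [TopologicalSpace Y]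
    (f : Set X → Set Y) : TopologicalSpace (X ⊕ Y) :=
  TopologicalSpace.generateFrom (compl '' AWClosed f)

/-- `X +_f W` is a (Hausdorff) compactification of `X`: a compact Hausdorff Artin–Wraith
glueing in which `X` is dense. -/
def IsCompactification {X W : Type*} [TopologicalSpace X] [TopologicalSpace W]
    (f : Set X → Set W) : Prop :=
  Admissible f ∧
  @CompactSpace (X ⊕ W) (AWTop f) ∧
  @T2Space (X ⊕ W) (AWTop f) ∧
  @Dense (X ⊕ W) (AWTop f) (Set.range Sum.inl)

/-- A relation `e ⊆ X × X` is proper if `𝔅(B,e)` and `𝔅(B,e⁻¹)` are topologically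
bounded for every topologically bounded `B`. -/
def ProperRel {X : Type*} [TopologicalSpace X] (e : Set (X × X)) : Prop :=
  ∀ B : Set X, TopBounded B → TopBounded (Bnh B e) ∧ TopBounded (Bnh B (invRel e))

/-- `e` is a perspective subset of `X × X` with respect to the compactification `X +_f W`. -/
def PerspRel {X W : Type*} [TopologicalSpace X] [TopologicalSpace W]
    (f : Set X → Set W) (e : Set (X × X)) : Prop :=
  ProperRel e ∧
  ∀ y : W, ∀ V : Set (X ⊕ W), IsOpen[AWTop f] V → Sum.inr y ∈ V →
    ∃ U : Set (X ⊕ W), IsOpen[AWTop f] U ∧ Sum.inr y ∈ U ∧ U ⊆ V ∧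
      ∀ p ∈ e, Sum.inl p.1 ∈ U → Sum.inl p.2 ∈ V

/-- A perspective compactification of the coarse space `(X, ε)`. -/
def PerspCompactification {X W : Type*} [TopologicalSpace X] [TopologicalSpace W]
    (ε : Set (Set (X × X))) (f : Set X → Set W) : Prop :=
  IsCompactification f ∧ ∀ e ∈ ε, PerspRel f e

/-- The pullback of `f : Closed(X) → Closed(W)` with respect to `π : Y → X` and
`ϖ : Z → W`. -/
def pullbackAW {X Y Z W : Type*} [TopologicalSpace X] [TopologicalSpace Z]
    (f : Set X → Set W) (π : Y → X) (ϖ : Z → W) (A : Set Y) : Set Z :=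
  closure (ϖ ⁻¹' (f (closure (π '' A))))

/-! ### Group actions -/

/-- `φ : G → X → X` is an action by homeomorphisms. -/
def IsActionByHomeos {G X : Type*} [Group G] [TopologicalSpace X]
    (φ : G → X → X) : Prop :=
  (∀ g : G, Continuous (φ g)) ∧ (∀ x : X, φ 1 x = x) ∧
    ∀ g h : G, ∀ x : X, φ (g * h) x = φ g (φ h x)

/-- A properly discontinuous action. -/
def ProperlyDisc {G X : Type*} [TopologicalSpace X] (φ : G → X → X) : Prop :=
  ∀ K : Set X, IsCompact K → {g : G | (φ g '' K ∩ K).Nonempty}.Finite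

/-- A cocompact action. -/
def CocompactAct {G X : Type*} [TopologicalSpace X] (φ : G → X → X) : Prop :=
  ∃ K : Set X, IsCompact K ∧ (⋃ g : G, φ g '' K) = Set.univ

/-- The saturation `Sat(A) = {(φ(g,x), φ(g,x')) : g ∈ G, x, x' ∈ A}`. -/
def Sat {G X : Type*} (φ : G → X → X) (A : Set X) : Set (X × X) :=
  {p | ∃ g : G, ∃ x ∈ A, ∃ x' ∈ A, p = (φ g x, φ g x')}

/-- The coarse structure `ε_φ` on `X` generated by the saturations of topologically
bounded sets. -/
def coarseOfAction {G X : Type*} [TopologicalSpace X] (φ : G → X → X) :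
    Set (Set (X × X)) :=
  genCoarse {e | ∃ A : Set X, TopBounded A ∧ e = Sat φ A}

/-- The saturation for the left multiplication action of a group on itself. -/
def SatMul {G : Type*} [Group G] (U : Set G) : Set (G × G) :=
  {p | ∃ g : G, ∃ u ∈ U, ∃ u' ∈ U, p = (g * u, g * u')}

/-- The coarse structure `ε_G` on the group `G`, generated by the saturations of
finite subsets under the left multiplication action. -/
def coarseGroup (G : Type*) [Group G] : Set (Set (G × G)) :=
  genCoarse {e | ∃ U : Set G, U.Finite ∧ e = SatMul U}

/-- The compactification `X +_f W` is group-theoretically perspective with respect to the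
action `φ`. -/
def GTPerspective {G X W : Type*} [TopologicalSpace X] [TopologicalSpace W]
    (φ : G → X → X) (f : Set X → Set W) : Prop :=
  ∀ K : Set X, IsCompact K → ∀ y : W, ∀ U : Set (X ⊕ W),
    IsOpen[AWTop f] U → Sum.inr y ∈ U →
      ∃ V : Set (X ⊕ W), IsOpen[AWTop f] V ∧ Sum.inr y ∈ V ∧ V ⊆ U ∧
        ∀ g : G, (∃ x ∈ K, Sum.inl (φ g x) ∈ V) → ∀ x ∈ K, Sum.inl (φ g x) ∈ U

/-! ### Rays and accessibility -/

/-- A family `Ψ` of rays in `X` based at `p`: each member is a pair `(A, γ)` of a closed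
unbounded subset `A ⊆ [0,∞)` containing `0` and a map `γ : ℝ → X` (regarded on `A`) which
is injective on `A`, proper, and satisfies `γ 0 = p`. -/
def GoodRayFamily {X : Type*} [TopologicalSpace X] (p : X)
    (Ψ : Set (Set ℝ × (ℝ → X))) : Prop :=
  ∀ r ∈ Ψ, r.1 ⊆ Set.Ici (0 : ℝ) ∧ IsClosed r.1 ∧ ¬Bornology.IsBounded r.1 ∧
    (0 : ℝ) ∈ r.1 ∧ r.2 0 = p ∧ Set.InjOn r.2 r.1 ∧
    ∀ B : Set X, TopBounded B → Bornology.IsBounded (r.1 ∩ r.2 ⁻¹' B)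

/-- The compactification `X +_f W` is `Ψ`-accessible. -/
def AccessibleComp {X W : Type*} [TopologicalSpace X] [TopologicalSpace W]
    (f : Set X → Set W) (Ψ : Set (Set ℝ × (ℝ → X))) : Prop :=
  (∀ w : W, ∃ r ∈ Ψ, f (closure (r.2 '' r.1)) = {w}) ∧
  ∀ r ∈ Ψ, ∃ w : W, f (closure (r.2 '' r.1)) = {w}


section AWAux

variable {X Y : Type*} [TopologicalSpace X] [TopologicalSpace Y] {f : Set X → Set Y}

lemma Admissible.mono' (hf : Admissible f) {A B : Set X} (hA : IsClosed A) (hB : IsClosed B)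
    (h : A ⊆ B) : f A ⊆ f B := by
  have hAB : A ∪ B = B := Set.union_eq_self_of_subset_left h
  calc f A ⊆ f A ∪ f B := Set.subset_union_left
    _ = f (A ∪ B) := (hf.2.1 A B hA hB).symm
    _ = f B := by rw [hAB]

lemma sInter_mem_AWClosed (hf : Admissible f) {S : Set (Set (X ⊕ Y))}
    (hS : S ⊆ AWClosed f) : ⋂₀ S ∈ AWClosed f := by
  have h1 : Sum.inl ⁻¹' ⋂₀ S = ⋂ C ∈ S, Sum.inl ⁻¹' C := by
    ext x; simp [Set.mem_sInter]
  have h2 : Sum.inr ⁻¹' ⋂₀ S = ⋂ C ∈ S, Sum.inr ⁻¹' C := by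
    ext y; simp [Set.mem_sInter]
  refine ⟨?_, ?_, ?_⟩
  · rw [h1]; exact isClosed_biInter fun C hC => (hS hC).1
  · rw [h2]; exact isClosed_biInter fun C hC => (hS hC).2.1
  · intro z hz
    rw [Set.mem_sInter]
    intro C hC
    obtain ⟨y, hy, rfl⟩ := hz
    have hsub : Sum.inl ⁻¹' ⋂₀ S ⊆ Sum.inl ⁻¹' C := fun x hx => hx C hC
    have hcl1 : IsClosed (Sum.inl ⁻¹' ⋂₀ S) := by
      rw [h1]; exact isClosed_biInter fun C hC => (hS hC).1
    have := hf.mono' hcl1 (hS hC).1 hsub hy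
    exact (hS hC).2.2 ⟨y, this, rfl⟩

lemma union_mem_AWClosed (hf : Admissible f) {C D : Set (X ⊕ Y)}
    (hC : C ∈ AWClosed f) (hD : D ∈ AWClosed f) : C ∪ D ∈ AWClosed f := by
  refine ⟨?_, ?_, ?_⟩
  · rw [Set.preimage_union]; exact hC.1.union hD.1
  · rw [Set.preimage_union]; exact hC.2.1.union hD.2.1
  · rw [Set.preimage_union, hf.2.1 _ _ hC.1 hD.1, Set.image_union]
    exact Set.union_subset_union hC.2.2 hD.2.2

lemma empty_mem_AWClosed (hf : Admissible f) : (∅ : Set (X ⊕ Y)) ∈ AWClosed f := by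
  refine ⟨?_, ?_, ?_⟩ <;> simp [hf.2.2]

lemma mem_AWClosed_of_generateOpen (hf : Admissible f) {U : Set (X ⊕ Y)}
    (h : TopologicalSpace.GenerateOpen (compl '' AWClosed f) U) : Uᶜ ∈ AWClosed f := by
  induction h with
  | basic V hV => obtain ⟨C, hC, rfl⟩ := hV; simpa using hC
  | univ => simpa using empty_mem_AWClosed hf
  | inter U V _ _ hU hV => rw [Set.compl_inter]; exact union_mem_AWClosed hf hU hV
  | sUnion S _ hS =>
      rw [Set.compl_sUnion]
      exact sInter_mem_AWClosed hf (by rintro _ ⟨U, hU, rfl⟩; exact hS U hU)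

lemma isClosed_AWTop_iff (hf : Admissible f) {C : Set (X ⊕ Y)} :
    IsClosed[AWTop f] C ↔ C ∈ AWClosed f := by
  letI := AWTop f
  constructor
  · intro h
    have hU : IsOpen[AWTop f] Cᶜ := h.isOpen_compl
    have := mem_AWClosed_of_generateOpen hf (hU : TopologicalSpace.GenerateOpen _ Cᶜ)
    simpa using this
  · intro h
    rw [← isOpen_compl_iff]
    exact TopologicalSpace.isOpen_generateFrom_of_mem ⟨C, h, rfl⟩

lemma continuous_inl_AWTop (hf : Admissible f) :
    Continuous[_, AWTop f] (Sum.inl : X → X ⊕ Y) := by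
  letI := AWTop f
  rw [continuous_iff_isClosed]
  intro C hC
  exact ((isClosed_AWTop_iff hf).1 hC).1

lemma continuous_inr_AWTop (hf : Admissible f) :
    Continuous[_, AWTop f] (Sum.inr : Y → X ⊕ Y) := by
  letI := AWTop f
  rw [continuous_iff_isClosed]
  intro C hC
  exact ((isClosed_AWTop_iff hf).1 hC).2.1

lemma inducing_inl_AWTop (hf : Admissible f) :
    @Topology.IsInducing X (X ⊕ Y) _ (AWTop f) Sum.inl := by
  letI := AWTop f
  refine ⟨TopologicalSpace.ext_isClosed fun A => ?_⟩
  rw [isClosed_induced_iff]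
  constructor
  · intro hA
    refine ⟨Sum.inl '' A ∪ Sum.inr '' f A, (isClosed_AWTop_iff hf).2 ⟨?_, ?_, ?_⟩, ?_⟩
    · have : Sum.inl ⁻¹' (Sum.inl '' A ∪ Sum.inr '' f A) = A := by
        ext x; simp [Sum.inl_injective.eq_iff]
      rw [this]; exact hA
    · have : Sum.inr ⁻¹' (Sum.inl '' A ∪ Sum.inr '' f A) = f A := by
        ext y; simp [Sum.inr_injective.eq_iff]
      rw [this]; exact hf.1 A hA
    · have : Sum.inl ⁻¹' (Sum.inl '' A ∪ Sum.inr '' f A) = A := by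
        ext x; simp [Sum.inl_injective.eq_iff]
      rw [this]
      exact Set.subset_union_right
    · ext x; simp [Sum.inl_injective.eq_iff]
  · rintro ⟨C, hC, rfl⟩
    exact ((isClosed_AWTop_iff hf).1 hC).1

end AWAux

/-- for `Y` compact and `f` admissible, `X +_f Y` is compact iff
`f A ≠ ∅` for every closed non-compact `A ⊆ X`. -/
theorem stmt17 {X Y : Type*} [TopologicalSpace X] [TopologicalSpace Y] [CompactSpace Y]
    (f : Set X → Set Y) (hf : Admissible f) :
    @CompactSpace (X ⊕ Y) (AWTop f) ↔
      ∀ A : Set X, IsClosed A → ¬IsCompact A → (f A).Nonempty := by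
  letI := AWTop f
  constructor
  · intro hcomp A hA hnc
    by_contra hne
    rw [Set.not_nonempty_iff_eq_empty] at hne
    have hmem : Sum.inl '' A ∈ AWClosed f := by
      have h1 : Sum.inl ⁻¹' (Sum.inl '' A : Set (X ⊕ Y)) = A := by
        ext x; simp [Sum.inl_injective.eq_iff]
      have h2 : Sum.inr ⁻¹' (Sum.inl '' A : Set (X ⊕ Y)) = ∅ := by
        ext y; simp
      exact ⟨by rw [h1]; exact hA, by rw [h2]; exact isClosed_empty,
        by rw [h1, hne]; simp⟩
    have hcl : IsClosed[AWTop f] (Sum.inl '' A) := (isClosed_AWTop_iff hf).2 hmem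
    have hcpt : IsCompact (Sum.inl '' A) := hcl.isCompact
    exact hnc ((inducing_inl_AWTop hf).isCompact_iff.2 hcpt)
  · intro h
    refine ⟨?_⟩
    refine isCompact_of_finite_subcover fun {ι} U hU hcov => ?_
    classical
    -- Y is compact inside X ⊕ Y
    have hYcpt : IsCompact (Set.range (Sum.inr : Y → X ⊕ Y)) := by
      rw [← Set.image_univ]
      exact (isCompact_univ).image (continuous_inr_AWTop hf)
    obtain ⟨t, ht⟩ := hYcpt.elim_finite_subcover U hU
      (Set.range Sum.inr |>.subset_univ.trans hcov)
    set V : Set (X ⊕ Y) := ⋃ i ∈ t, U i with hV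
    have hVopen : IsOpen[AWTop f] V := isOpen_biUnion fun i _ => hU i
    have hCmem : Vᶜ ∈ AWClosed f :=
      (isClosed_AWTop_iff hf).1 (isClosed_compl_iff.2 hVopen)
    set A : Set X := Sum.inl ⁻¹' Vᶜ with hA
    have hAcl : IsClosed A := hCmem.1
    have hfA : f A = ∅ := by
      by_contra hne
      obtain ⟨y, hy⟩ := Set.nonempty_iff_ne_empty.2 hne
      have h1 : Sum.inr y ∈ Vᶜ := hCmem.2.2 ⟨y, hy, rfl⟩
      exact h1 (ht ⟨y, rfl⟩)
    have hAcpt : IsCompact A := by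
      by_contra hnc
      exact (h A hAcl hnc).ne_empty hfA
    have hicpt : IsCompact (Sum.inl '' A) :=
      hAcpt.image (continuous_inl_AWTop hf)
    obtain ⟨s, hs⟩ := hicpt.elim_finite_subcover U hU
      ((Set.subset_univ _).trans hcov)
    refine ⟨s ∪ t, fun z _ => ?_⟩
    by_cases hzV : z ∈ V
    · rw [hV] at hzV
      obtain ⟨i, hi⟩ := Set.mem_iUnion.1 hzV
      simp only [Set.mem_iUnion] at hi ⊢
      obtain ⟨hit, hzi⟩ := hi
      exact ⟨i, Finset.mem_union_right s hit, hzi⟩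
    · have hzC : z ∈ Vᶜ := hzV
      have : z ∈ Sum.inl '' A := by
        rcases z with x | y
        · exact ⟨x, hzC, rfl⟩
        · exact absurd (ht ⟨y, rfl⟩) hzC
      have := hs this
      simp only [Set.mem_iUnion] at this ⊢
      obtain ⟨i, hit, hzi⟩ := this
      exact ⟨i, Finset.mem_union_left t hit, hzi⟩

end Paper
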